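/- The inequality 12Λ(π/6) + 60Λ(π/10) − 54Λ(π/9) < 30Λ(π/3) holds. (Equivalently, the constant a = 4·v_tet + 12Λ(π/6) + 60Λ(π/10) − 54Λ(π/9) appearing in Adams's bound when g₅ ≥ 1 is strictly less than 14·v_tet, so for a reduced alternating diagram with more than eight twists, each of length at least five, the bound 10·v_tet·(t − 1.4) improves 10·v_tet·t − a.) -/

import Mathlib

open Real MeasureTheory

/-- The Lobachevsky function `Λ(θ) = −∫₀^θ log |2 sin t| dt`. -/
noncomputable def lob (θ : ℝ) : ℝ := - ∫ t in (0:ℝ)..θ, Real.log |2 * Real.sin t|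

/-!
From the Taylor bounds of `sin`, `log (2t) - t²/5 ≤ log |2 sin t| ≤ log (2t) - t²/6 + t⁴/120`
for small `t > 0`; integrating, `Λ(θ)` is `θ - θ log (2θ) + θ³/18` up to explicit errors.
In `12Λ(π/6) + 60Λ(π/10) - 54Λ(π/9) - 30Λ(π/3)` the terms `θ - θ log (2θ)` add up to
`π (log (2¹⁶ 5⁶ π⁸ / 3²⁰) - 8)`, which is negative since `2¹⁶ 5⁶ π⁸ < 3²⁰ e⁸`, and the cubic
terms contribute about `-1.8`, which dominates the quintic error terms.
-/

open intervalIntegral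

lemma cos_le_quartic_taylor {x : ℝ} (hx : 0 ≤ x) : cos x ≤ 1 - x ^ 2 / 2 + x ^ 4 / 24 := by
  have h : ∫ t in (0:ℝ)..x, (t - t ^ 3 / 6) ≤ ∫ t in (0:ℝ)..x, sin t :=
    integral_mono_on hx (Continuous.intervalIntegrable (by fun_prop) _ _)
      (Continuous.intervalIntegrable (by fun_prop) _ _) fun t ht => sin_ge_sub_cube ht.1
  simp (disch := exact Continuous.intervalIntegrable (by fun_prop) _ _) only
    [intervalIntegral.integral_sub, integral_pow, intervalIntegral.integral_div, integral_sin] at h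
  norm_num at h
  linarith

lemma sin_le_quintic_taylor {x : ℝ} (hx : 0 ≤ x) : sin x ≤ x - x ^ 3 / 6 + x ^ 5 / 120 := by
  have h : ∫ t in (0:ℝ)..x, cos t ≤ ∫ t in (0:ℝ)..x, (1 - t ^ 2 / 2 + t ^ 4 / 24) :=
    integral_mono_on hx (Continuous.intervalIntegrable (by fun_prop) _ _)
      (Continuous.intervalIntegrable (by fun_prop) _ _) fun t ht => cos_le_quartic_taylor ht.1
  simp (disch := exact Continuous.intervalIntegrable (by fun_prop) _ _) only
    [intervalIntegral.integral_add, intervalIntegral.integral_sub, integral_pow,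
      intervalIntegral.integral_div, integral_one, integral_cos] at h
  norm_num at h
  linarith

lemma intervalIntegrable_log_two_mul (a b : ℝ) :
    IntervalIntegrable (fun t => log (2 * t)) volume a b := by
  simpa using (intervalIntegrable_log' (a := 2 * a) (b := 2 * b)).comp_mul_left (c := 2)

lemma integral_log_two_mul (θ : ℝ) : ∫ t in (0:ℝ)..θ, log (2 * t) = θ * log (2 * θ) - θ := by
  rw [integral_comp_mul_left (fun t => log t) two_ne_zero, integral_log]
  simp
  ring

lemma integral_log_two_mul_sub {p : ℝ → ℝ} (hp : Continuous p) (θ : ℝ) :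
    ∫ t in (0:ℝ)..θ, (log (2 * t) - p t) = θ * log (2 * θ) - θ - ∫ t in (0:ℝ)..θ, p t := by
  rw [intervalIntegral.integral_sub (intervalIntegrable_log_two_mul _ _)
    (hp.intervalIntegrable _ _), integral_log_two_mul]

lemma intervalIntegrable_log_abs_two_mul_sin (a b : ℝ) :
    IntervalIntegrable (fun t => log |2 * sin t|) volume a b :=
  (analyticOnNhd_const.mul analyticOnNhd_sin).meromorphicOn.intervalIntegrable_log_norm

lemma log_abs_two_mul_sin_eq {t : ℝ} (ht : 0 < t) (hs : 0 < sin t) :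
    log |2 * sin t| = log (2 * t) + log (sin t / t) := by
  rw [abs_of_pos (by positivity), ← log_mul (by positivity) (by positivity)]
  field_simp

lemma log_abs_two_mul_sin_le {t : ℝ} (h0 : 0 < t) (hπ : t < π) :
    log |2 * sin t| ≤ log (2 * t) - (t ^ 2 / 6 - t ^ 4 / 120) := by
  have hs := sin_pos_of_pos_of_lt_pi h0 hπ
  have hquot : sin t / t ≤ 1 - t ^ 2 / 6 + t ^ 4 / 120 := by
    rw [div_le_iff₀ h0]
    linarith [sin_le_quintic_taylor h0.le]
  rw [log_abs_two_mul_sin_eq h0 hs]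
  linarith [log_le_sub_one_of_pos (div_pos hs h0)]

lemma log_two_mul_sub_le_log_abs_two_mul_sin {t : ℝ} (h0 : 0 < t) (h1 : t ≤ 1) :
    log (2 * t) - t ^ 2 / 5 ≤ log |2 * sin t| := by
  have hs := sin_pos_of_pos_of_lt_pi h0 (h1.trans_lt (by linarith [pi_gt_three]))
  have hquot : (sin t / t)⁻¹ ≤ 1 + t ^ 2 / 5 := by
    rw [inv_div, div_le_iff₀ hs]
    nlinarith [sin_ge_sub_cube h0.le,
      mul_nonneg (pow_nonneg h0.le 3) (sub_nonneg.2 (pow_le_one₀ h0.le h1 (n := 2)))]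
  rw [log_abs_two_mul_sin_eq h0 hs]
  linarith [one_sub_inv_le_log_of_pos (div_pos hs h0)]

lemma lob_le {θ : ℝ} (h0 : 0 ≤ θ) (h1 : θ ≤ 1) : lob θ ≤ θ - θ * log (2 * θ) + θ ^ 3 / 15 := by
  have h : ∫ t in (0:ℝ)..θ, (log (2 * t) - t ^ 2 / 5) ≤ ∫ t in (0:ℝ)..θ, log |2 * sin t| :=
    integral_mono_on_of_le_Ioo h0
      ((intervalIntegrable_log_two_mul _ _).sub (Continuous.intervalIntegrable (by fun_prop) _ _))
      (intervalIntegrable_log_abs_two_mul_sin _ _)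
      fun t ht => log_two_mul_sub_le_log_abs_two_mul_sin ht.1 (ht.2.le.trans h1)
  rw [integral_log_two_mul_sub (by fun_prop), intervalIntegral.integral_div, integral_pow] at h
  rw [lob]
  linarith

lemma le_lob {θ : ℝ} (h0 : 0 ≤ θ) (hπ : θ ≤ π) :
    θ - θ * log (2 * θ) + θ ^ 3 / 18 - θ ^ 5 / 600 ≤ lob θ := by
  have h : ∫ t in (0:ℝ)..θ, log |2 * sin t|
      ≤ ∫ t in (0:ℝ)..θ, (log (2 * t) - (t ^ 2 / 6 - t ^ 4 / 120)) :=
    integral_mono_on_of_le_Ioo h0 (intervalIntegrable_log_abs_two_mul_sin _ _)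
      ((intervalIntegrable_log_two_mul _ _).sub (Continuous.intervalIntegrable (by fun_prop) _ _))
      fun t ht => log_abs_two_mul_sin_le ht.1 (ht.2.trans_le hπ)
  rw [integral_log_two_mul_sub (by fun_prop)] at h
  simp (disch := exact Continuous.intervalIntegrable (by fun_prop) _ _) only
    [intervalIntegral.integral_sub, intervalIntegral.integral_div, integral_pow] at h
  rw [lob]
  linarith

lemma log_combination_lt_eight : 16 * log 2 + 6 * log 5 + 8 * log π - 20 * log 3 < 8 := by
  have hπ : π ^ 8 < 3.15 ^ 8 := pow_lt_pow_left₀ pi_lt_d2 pi_pos.le (by norm_num)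
  have he : 2.7182818283 ^ 8 < exp 8 := by
    rw [show (8 : ℝ) = (8 : ℕ) by norm_num, ← exp_one_pow]
    exact pow_lt_pow_left₀ exp_one_gt_d9 (by norm_num) (by norm_num)
  have h : 2 ^ 16 * 5 ^ 6 * π ^ 8 < 3 ^ 20 * exp 8 := by nlinarith
  have hlog := log_lt_log (by positivity) h
  rw [log_mul (by positivity) (by positivity), log_mul (by positivity) (by positivity),
    log_mul (by positivity) (by positivity), log_exp, log_pow, log_pow, log_pow, log_pow] at hlog
  push_cast at hlog
  linarith

/-- `12Λ(π/6) + 60Λ(π/10) − 54Λ(π/9) < 30Λ(π/3)`: the constant appearing in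
Adams's bound when `g₅ ≥ 1` is strictly less than `14·v_tet` (after subtracting
`4·v_tet` from both sides). -/
theorem adams_constant_lt :
    12 * lob (Real.pi / 6) + 60 * lob (Real.pi / 10) - 54 * lob (Real.pi / 9)
      < 30 * lob (Real.pi / 3) := by
  have hπ := pi_lt_four
  have h6 := lob_le (θ := π / 6) (by positivity) (by linarith)
  have h10 := lob_le (θ := π / 10) (by positivity) (by linarith)
  have h9 := le_lob (θ := π / 9) (by positivity) (by linarith [pi_pos])
  have h3 := le_lob (θ := π / 3) (by positivity) (by linarith [pi_pos])
  rw [show 2 * (π / 6) = π / 3 by ring, log_div pi_ne_zero three_ne_zero] at h6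
  rw [show 2 * (π / 10) = π / 5 by ring, log_div pi_ne_zero (by norm_num)] at h10
  rw [show 2 * (π / 9) = 2 * π / 3 ^ 2 by ring, log_div (by positivity) (by norm_num),
    log_mul two_ne_zero pi_ne_zero, log_pow, Nat.cast_ofNat] at h9
  rw [show 2 * (π / 3) = 2 * π / 3 by ring, log_div (by positivity) three_ne_zero,
    log_mul two_ne_zero pi_ne_zero] at h3
  have hlog := mul_lt_mul_of_pos_left log_combination_lt_eight pi_pos
  have hquintic : π ^ 5 < 200 * π ^ 3 := by
    rw [show π ^ 5 = π ^ 2 * π ^ 3 by ring]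
    exact mul_lt_mul_of_pos_right (by nlinarith [pi_pos]) (pow_pos pi_pos 3)
  linarith [pow_pos pi_pos 3]
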